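/- Let n ≥ 3 and 2 ≤ k ≤ n−1, and let x₁,…,xₙ be configurations such that every pair appearing as (arrivals, services) in the recursive definitions of all tandem departure maps below has finite queue lengths. Then Dⁿ(x₁,…,xₙ) = Dⁿ( x₁,…,x_{k−1}, R(x_k,x_{k+1}), D(x_k,x_{k+1}), x_{k+2},…,xₙ ) (when k = n−1 the final segment x_{k+2},…,xₙ is empty). -/

import Mathlib

open scoped BigOperators

/-- A particle configuration on `ℤ`: a `{0,1}`-valued function. -/
abbrev Config := ℤ → ℤ

/-- `x` takes only the values `0` and `1`. -/
def IsConfig (x : Config) : Prop := ∀ i, x i = 0 ∨ x i = 1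

/-- `x[i,j] = ∑_{k=i}^j x(k)` (zero if `j < i`). -/
noncomputable def cnt (x : Config) (i j : ℤ) : ℤ := ∑ k ∈ Finset.Icc i j, x k

/-- `(a,s)` has finite queue lengths. -/
def FinQ (a s : Config) : Prop :=
  ∀ i : ℤ, BddAbove {v : ℤ | ∃ j ≤ i, v = cnt a j i - cnt s j i}

/-- The queue length `Q_i(a,s) = sup_{j ≤ i} max(a[j,i] - s[j,i], 0)`. -/
noncomputable def queue (a s : Config) (i : ℤ) : ℤ :=
  sSup {q : ℤ | ∃ j ≤ i, q = max (cnt a j i - cnt s j i) 0}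

/-- The departure configuration `D(a,s)`. -/
noncomputable def dep (a s : Config) : Config := fun i =>
  if s i = 1 ∧ (0 < queue a s (i - 1) ∨ a i = 1) then 1 else 0

/-- The unused-service configuration `U(a,s)`. -/
noncomputable def unusedSrv (a s : Config) : Config := fun i =>
  if s i = 1 ∧ queue a s (i - 1) = 0 ∧ a i = 0 then 1 else 0

/-- `R(a,s)(i) = a(i) + U(a,s)(i)`. -/
noncomputable def Rmap (a s : Config) : Config := fun i => a i + unusedSrv a s i

/-- Truncation: `x_{n,0}(i) = x(i)` for `i ≥ n`, `0` otherwise. -/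
def trunc (x : Config) (n : ℤ) : Config := fun i => if n ≤ i then x i else 0

/-- Left-peeling tandem queue: `Dtandem x [s₁,…,s_k] = D(…D(D(x,s₁),s₂)…,s_k)`. -/
noncomputable def Dtandem : Config → List Config → Config
  | x, [] => x
  | x, s :: rest => Dtandem (dep x s) rest

/-- `DtandemList [x₁,…,xₙ] = Dⁿ(x₁,…,xₙ)`. -/
noncomputable def DtandemList : List Config → Config
  | [] => fun _ => 0
  | x :: rest => Dtandem x rest

/-- `DtandemN x = Dⁿ(x 0, …, x (n-1))`. -/
noncomputable def DtandemN {n : ℕ} (x : Fin n → Config) : Config :=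
  DtandemList (List.ofFn x)

/-- Every pair appearing as (arrivals, services) in the recursive definition of the
tandem departure map has finite queue lengths. -/
def TandemFinQ : List Config → Prop
  | [] => True
  | [_] => True
  | x :: s :: rest => FinQ x s ∧ TandemFinQ (dep x s :: rest)
  termination_by l => l.length

/-!
Write `y` for the output `D^{k-1}(x₁,…,x_{k-1})` of the first `k-1` servers; the claim is the
two-server identity `D(D(y,a),b) = D(D(y,R(a,b)),D(a,b))`.

If `y` vanishes before some time, all queues start empty and the five queue lengths
`Q(y,a)`, `Q(D(y,a),b)`, `Q(y,R(a,b))`, `Q(D(y,R(a,b)),D(a,b))`, `Q(a,b)` obey Lindley's recursion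
`Qᵢ = max(Qᵢ₋₁ + aᵢ - sᵢ, 0)`. A finite case check shows that one time step preserves an
invariant relating them and, under this invariant, produces the same output in both
systems.

A general `y` is approximated by its truncations `trunc y n`. Finite queue lengths mean that each
supremum defining a queue length is attained at a finite past time, so truncating far enough in
the past changes neither the queue lengths nor the output at a fixed time.
-/

open Filter

lemma IsConfig.nonneg {x : Config} (hx : IsConfig x) (k : ℤ) : 0 ≤ x k := by
  rcases hx k with h | h <;> omega

lemma cnt_self (x : Config) (i : ℤ) : cnt x i i = x i := by
  rw [cnt, Finset.Icc_self, Finset.sum_singleton]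

lemma cnt_eq_cnt_sub_one_add (x : Config) {j i : ℤ} (h : j ≤ i) :
    cnt x j i = cnt x j (i - 1) + x i := by
  rw [cnt, cnt, ← Finset.insert_Icc_sub_one_right_eq_Icc h, Finset.sum_insert (by simp),
    add_comm]

lemma cnt_nonneg {x : Config} (hx : ∀ k, 0 ≤ x k) (j i : ℤ) : 0 ≤ cnt x j i :=
  Finset.sum_nonneg fun k _ => hx k

lemma cnt_mono {x y : Config} (h : ∀ k, x k ≤ y k) (j i : ℤ) : cnt x j i ≤ cnt y j i :=
  Finset.sum_le_sum fun k _ => h k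

lemma cnt_congr {x y : Config} {j i : ℤ} (h : ∀ k, j ≤ k → x k = y k) :
    cnt x j i = cnt y j i :=
  Finset.sum_congr rfl fun k hk => h k (Finset.mem_Icc.1 hk).1

lemma cnt_eq_zero_of_vanishing {x : Config} {n j i : ℤ} (hx0 : ∀ k < n, x k = 0) (hi : i < n) :
    cnt x j i = 0 :=
  Finset.sum_eq_zero fun k hk => hx0 k (by rw [Finset.mem_Icc] at hk; omega)

lemma cnt_le_cnt_of_vanishing {x : Config} {n : ℤ} (hx : ∀ k, 0 ≤ x k)
    (hx0 : ∀ k < n, x k = 0) (j i : ℤ) : cnt x j i ≤ cnt x n i := by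
  rcases le_total j n with hjn | hnj
  · refine (Finset.sum_subset (Finset.Icc_subset_Icc hjn le_rfl) fun k hk hk' => ?_).ge
    simp only [Finset.mem_Icc] at hk hk'
    exact hx0 k (by omega)
  · exact Finset.sum_le_sum_of_subset_of_nonneg (Finset.Icc_subset_Icc hnj le_rfl)
      fun k _ _ => hx k

section Queue

variable {a a' s : Config}

lemma bddAbove_queueSet (h : FinQ a s) (i : ℤ) :
    BddAbove {q : ℤ | ∃ j ≤ i, q = max (cnt a j i - cnt s j i) 0} := by
  obtain ⟨M, hM⟩ := h i
  refine ⟨max M 0, ?_⟩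
  rintro _ ⟨j, hj, rfl⟩
  exact max_le_max_right 0 (hM ⟨j, hj, rfl⟩)

lemma le_queue (h : FinQ a s) {j i : ℤ} (hj : j ≤ i) :
    max (cnt a j i - cnt s j i) 0 ≤ queue a s i :=
  le_csSup (bddAbove_queueSet h i) ⟨j, hj, rfl⟩

lemma queue_nonneg (h : FinQ a s) (i : ℤ) : 0 ≤ queue a s i :=
  (le_max_right _ _).trans (le_queue h le_rfl)

lemma queue_le {i M : ℤ} (hM : 0 ≤ M) (h : ∀ j ≤ i, cnt a j i - cnt s j i ≤ M) :
    queue a s i ≤ M :=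
  csSup_le ⟨_, i, le_rfl, rfl⟩ fun _ ⟨j, hj, hq⟩ => hq ▸ max_le (h j hj) hM

lemma exists_queue_eq (h : FinQ a s) (i : ℤ) :
    ∃ j ≤ i, queue a s i = max (cnt a j i - cnt s j i) 0 :=
  Int.csSup_mem (s := {q : ℤ | ∃ j ≤ i, q = max (cnt a j i - cnt s j i) 0})
    ⟨_, i, le_rfl, rfl⟩ (bddAbove_queueSet h i)

lemma queue_rec (h : FinQ a s) (i : ℤ) :
    queue a s i = max (queue a s (i - 1) + (a i - s i)) 0 := by
  have hprev : ∀ j ≤ i - 1, cnt a j (i - 1) - cnt s j (i - 1) ≤ queue a s (i - 1) :=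
    fun j hj => (le_max_left _ _).trans (le_queue h hj)
  have hcur : ∀ j ≤ i, cnt a j i - cnt s j i ≤ queue a s i :=
    fun j hj => (le_max_left _ _).trans (le_queue h hj)
  have hQ := queue_nonneg h (i - 1)
  refine le_antisymm (queue_le (le_max_right _ _) fun j hj => ?_) (max_le ?_ (queue_nonneg h i))
  · rcases hj.lt_or_eq with hj | rfl
    · rw [cnt_eq_cnt_sub_one_add a hj.le, cnt_eq_cnt_sub_one_add s hj.le]
      have := hprev j (by omega)
      omega
    · rw [cnt_self, cnt_self]
      omega
  · have hi := hcur i le_rfl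
    rw [cnt_self, cnt_self] at hi
    have : queue a s (i - 1) ≤ queue a s i - (a i - s i) :=
      queue_le (by omega) fun j hj => by
        have := hcur j (by omega)
        rw [cnt_eq_cnt_sub_one_add a (by omega), cnt_eq_cnt_sub_one_add s (by omega)] at this
        omega
    omega

lemma queue_mono (hle : ∀ k, a' k ≤ a k) (h : FinQ a s) (i : ℤ) :
    queue a' s i ≤ queue a s i :=
  queue_le (queue_nonneg h i) fun j hj =>
    (sub_le_sub_right (cnt_mono hle j i) _).trans ((le_max_left _ _).trans (le_queue h hj))

lemma queue_eq_of_forall_gt_of_eq (h : FinQ a s) (h' : FinQ a' s) {m : ℤ}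
    (ha : ∀ k > m, a' k = a k) (hm : queue a' s m = queue a s m) :
    ∀ i, m ≤ i → queue a' s i = queue a s i := by
  refine Int.leInduction hm fun i _ ih => ?_
  rw [queue_rec h' (i + 1), queue_rec h (i + 1), add_sub_cancel_right, ih, ha (i + 1) (by omega)]

lemma finQ_of_vanishing {n : ℤ} (ha : ∀ k, 0 ≤ a k) (ha0 : ∀ k < n, a k = 0)
    (hs : ∀ k, 0 ≤ s k) : FinQ a s := by
  intro i
  refine ⟨cnt a n i, ?_⟩
  rintro _ ⟨j, -, rfl⟩
  have := cnt_le_cnt_of_vanishing ha ha0 j i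
  have := cnt_nonneg hs j i
  omega

lemma queue_eq_zero_of_vanishing {n i : ℤ} (ha0 : ∀ k < n, a k = 0) (hs : ∀ k, 0 ≤ s k)
    (h : FinQ a s) (hi : i < n) : queue a s i = 0 :=
  le_antisymm
    (queue_le le_rfl fun j _ => by
      rw [cnt_eq_zero_of_vanishing ha0 hi, zero_sub, neg_nonpos]
      exact cnt_nonneg hs j i)
    (queue_nonneg h i)

end Queue

section Departures

variable {a a' s : Config}

lemma isConfig_dep (a s : Config) : IsConfig (dep a s) := by
  intro i
  unfold dep
  split_ifs <;> simp

lemma isConfig_Rmap (ha : IsConfig a) (s : Config) : IsConfig (Rmap a s) := by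
  intro i
  unfold Rmap unusedSrv
  rcases ha i with h | h <;> split_ifs <;> omega

lemma dep_congr {i : ℤ} (hq : queue a' s (i - 1) = queue a s (i - 1)) (ha : a' i = a i) :
    dep a' s i = dep a s i := by
  unfold dep
  rw [hq, ha]

lemma dep_mono (ha : IsConfig a) (hle : ∀ k, a' k ≤ a k) (h : FinQ a s) (k : ℤ) :
    dep a' s k ≤ dep a s k := by
  have hq := queue_mono hle h (k - 1)
  have hk := hle k
  unfold dep
  rcases ha k with h | h <;> split_ifs <;> omega

lemma dep_eq_zero_of_vanishing {n : ℤ} (ha0 : ∀ k < n, a k = 0) (hs : ∀ k, 0 ≤ s k)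
    (h : FinQ a s) : ∀ k < n, dep a s k = 0 := by
  intro k hk
  unfold dep
  rw [queue_eq_zero_of_vanishing ha0 hs h (by omega), ha0 k hk]
  simp

end Departures

section Truncation

variable {y s : Config}

lemma isConfig_trunc (hy : IsConfig y) (n : ℤ) : IsConfig (trunc y n) := by
  intro i
  unfold trunc
  split_ifs
  exacts [hy i, Or.inl rfl]

lemma trunc_of_lt (y : Config) {n k : ℤ} (h : k < n) : trunc y n k = 0 :=
  if_neg (not_le.2 h)

lemma trunc_of_le (y : Config) {n k : ℤ} (h : n ≤ k) : trunc y n k = y k :=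
  if_pos h

lemma trunc_le (hy : IsConfig y) (n k : ℤ) : trunc y n k ≤ y k := by
  unfold trunc
  split_ifs
  exacts [le_rfl, hy.nonneg k]

lemma finQ_trunc (hy : IsConfig y) (hs : ∀ k, 0 ≤ s k) (n : ℤ) : FinQ (trunc y n) s :=
  finQ_of_vanishing (isConfig_trunc hy n).nonneg (fun _ => trunc_of_lt y) hs

lemma eventually_queue_trunc_eq (hy : IsConfig y) (hs : ∀ k, 0 ≤ s k) (h : FinQ y s) (m : ℤ) :
    ∀ᶠ n in atBot, queue (trunc y n) s m = queue y s m := by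
  obtain ⟨j, hj, hq⟩ := exists_queue_eq h m
  refine eventually_atBot.2 ⟨j, fun n hn => le_antisymm (queue_mono (trunc_le hy n) h m) ?_⟩
  rw [hq, ← cnt_congr fun k hk => trunc_of_le y (hn.trans hk)]
  exact le_queue (finQ_trunc hy hs n) hj

lemma eventually_dep_dep_trunc_eq {s₁ s₂ : Config} (hy : IsConfig y) (hs₁ : ∀ k, 0 ≤ s₁ k)
    (hs₂ : ∀ k, 0 ≤ s₂ k) (h₁ : FinQ y s₁) (h₂ : FinQ (dep y s₁) s₂) (i : ℤ) :
    ∀ᶠ n in atBot, dep (dep (trunc y n) s₁) s₂ i = dep (dep y s₁) s₂ i := by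
  obtain ⟨j, hj, hq⟩ := exists_queue_eq h₂ (i - 1)
  filter_upwards [eventually_queue_trunc_eq hy hs₁ h₁ (j - 1), eventually_le_atBot j]
    with n hn hnj
  have hfin₁ := finQ_trunc hy hs₁ n
  have hdep : ∀ k, j ≤ k → dep (trunc y n) s₁ k = dep y s₁ k := fun k hk =>
    dep_congr
      (queue_eq_of_forall_gt_of_eq h₁ hfin₁ (fun l hl => trunc_of_le y (by omega)) hn _
        (by omega))
      (trunc_of_le y (by omega))
  have hfin₂ : FinQ (dep (trunc y n) s₁) s₂ :=
    finQ_of_vanishing (isConfig_dep _ _).nonneg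
      (dep_eq_zero_of_vanishing (fun _ => trunc_of_lt y) hs₁ hfin₁) hs₂
  have hq₂ : queue (dep (trunc y n) s₁) s₂ (i - 1) = queue (dep y s₁) s₂ (i - 1) := by
    refine le_antisymm (queue_mono (dep_mono hy (trunc_le hy n) h₁) h₂ _) ?_
    rw [hq, ← cnt_congr hdep]
    exact le_queue hfin₂ hj
  exact dep_congr hq₂ (hdep i (by omega))

end Truncation

section Interchange

/-- The invariant for `q₁ = Q(y,a)`, `q₂ = Q(D(y,a),b)`, `t₁ = Q(y,R(a,b))`,
`t₂ = Q(D(y,R(a,b)),D(a,b))` and `r = Q(a,b)`. -/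
def InterchangeInv (q₁ q₂ t₁ t₂ r : ℤ) : Prop :=
  t₁ + t₂ = q₁ + q₂ ∧ t₁ ≤ q₁ ∧ q₂ ≤ r ∧ (t₁ = q₁ ∨ q₂ = r)

theorem InterchangeInv.step {x a b q₁ q₂ t₁ t₂ r : ℤ}
    (hx : x = 0 ∨ x = 1) (ha : a = 0 ∨ a = 1) (hb : b = 0 ∨ b = 1)
    (hq₂ : 0 ≤ q₂) (ht₁ : 0 ≤ t₁)
    (h : InterchangeInv q₁ q₂ t₁ t₂ r) :
    let d := if a = 1 ∧ (0 < q₁ ∨ x = 1) then 1 else 0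
    let ρ := a + if b = 1 ∧ r = 0 ∧ a = 0 then 1 else 0
    let e := if b = 1 ∧ (0 < r ∨ a = 1) then 1 else 0
    let d' := if ρ = 1 ∧ (0 < t₁ ∨ x = 1) then 1 else 0
    InterchangeInv (max (q₁ + (x - a)) 0) (max (q₂ + (d - b)) 0)
      (max (t₁ + (x - ρ)) 0) (max (t₂ + (d' - e)) 0) (max (r + (a - b)) 0) ∧
    (if b = 1 ∧ (0 < q₂ ∨ d = 1) then 1 else 0 : ℤ) =
      if e = 1 ∧ (0 < t₂ ∨ d' = 1) then 1 else 0 := by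
  obtain ⟨h₁, h₂, h₃, h₄⟩ := h
  unfold InterchangeInv
  rcases hx with rfl | rfl <;> rcases ha with rfl | rfl <;> rcases hb with rfl | rfl <;>
    norm_num <;> (try split_ifs) <;> omega

variable {y a b : Config}

theorem dep_dep_eq_of_vanishing {n : ℤ} (hy : IsConfig y) (hy0 : ∀ k < n, y k = 0)
    (ha : IsConfig a) (hb : IsConfig b) (hab : FinQ a b) :
    dep (dep y a) b = dep (dep y (Rmap a b)) (dep a b) := by
  have hR := isConfig_Rmap ha b
  have hya : FinQ y a := finQ_of_vanishing hy.nonneg hy0 ha.nonneg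
  have hyR : FinQ y (Rmap a b) := finQ_of_vanishing hy.nonneg hy0 hR.nonneg
  have hda0 := dep_eq_zero_of_vanishing hy0 ha.nonneg hya
  have hdR0 := dep_eq_zero_of_vanishing hy0 hR.nonneg hyR
  have hyab : FinQ (dep y a) b := finQ_of_vanishing (isConfig_dep y a).nonneg hda0 hb.nonneg
  have hyRD : FinQ (dep y (Rmap a b)) (dep a b) :=
    finQ_of_vanishing (isConfig_dep _ _).nonneg hdR0 (isConfig_dep a b).nonneg
  let P : ℤ → Prop := fun i => InterchangeInv (queue y a i) (queue (dep y a) b i)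
    (queue y (Rmap a b) i) (queue (dep y (Rmap a b)) (dep a b) i) (queue a b i)
  have step : ∀ i, P (i - 1) →
      P i ∧ dep (dep y a) b i = dep (dep y (Rmap a b)) (dep a b) i := by
    intro i hP
    show InterchangeInv _ _ _ _ _ ∧ _
    rw [queue_rec hya i, queue_rec hyab i, queue_rec hyR i, queue_rec hyRD i, queue_rec hab i]
    exact InterchangeInv.step (hy i) (ha i) (hb i) (queue_nonneg hyab _) (queue_nonneg hyR _) hP
  have base : ∀ i < n, P i := by
    intro i hi
    show InterchangeInv _ _ _ _ _
    rw [queue_eq_zero_of_vanishing hy0 ha.nonneg hya hi,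
      queue_eq_zero_of_vanishing hda0 hb.nonneg hyab hi,
      queue_eq_zero_of_vanishing hy0 hR.nonneg hyR hi,
      queue_eq_zero_of_vanishing hdR0 (isConfig_dep a b).nonneg hyRD hi]
    exact ⟨rfl, le_rfl, queue_nonneg hab i, Or.inl rfl⟩
  have hP : ∀ i, n - 1 ≤ i → P i :=
    Int.leInduction (base _ (by omega)) fun i _ ih => (step (i + 1) (by simpa using ih)).1
  funext i
  exact (step i ((lt_or_ge (i - 1) n).elim (base _) fun h => hP _ (by omega))).2

theorem dep_dep_eq_dep_dep_Rmap (hy : IsConfig y) (ha : IsConfig a) (hb : IsConfig b)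
    (hab : FinQ a b) (h₁ : FinQ y a) (h₂ : FinQ (dep y a) b) (h₃ : FinQ y (Rmap a b))
    (h₄ : FinQ (dep y (Rmap a b)) (dep a b)) :
    dep (dep y a) b = dep (dep y (Rmap a b)) (dep a b) := by
  funext i
  obtain ⟨n, hn₁, hn₂⟩ := ((eventually_dep_dep_trunc_eq hy ha.nonneg hb.nonneg h₁ h₂ i).and
    (eventually_dep_dep_trunc_eq hy (isConfig_Rmap ha b).nonneg (isConfig_dep a b).nonneg
      h₃ h₄ i)).exists
  rw [← hn₁, ← hn₂,
    dep_dep_eq_of_vanishing (isConfig_trunc hy n) (fun _ => trunc_of_lt y) ha hb hab]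

end Interchange

lemma tandemFinQ_cons_cons {x s : Config} {l : List Config} :
    TandemFinQ (x :: s :: l) ↔ FinQ x s ∧ TandemFinQ (dep x s :: l) := by
  rw [TandemFinQ]

lemma TandemFinQ.of_append :
    ∀ {x : Config} {l₁ l₂ : List Config}, TandemFinQ (x :: (l₁ ++ l₂)) →
      TandemFinQ (Dtandem x l₁ :: l₂)
  | _, [], _, h => h
  | x, s :: l₁, _, h =>
    TandemFinQ.of_append (x := dep x s) (l₁ := l₁) (tandemFinQ_cons_cons.1 h).2

lemma isConfig_Dtandem {x : Config} (hx : IsConfig x) : ∀ l : List Config, IsConfig (Dtandem x l)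
  | [] => hx
  | s :: _ => isConfig_Dtandem (isConfig_dep x s) _

lemma Dtandem_append (l₁ l₂ : List Config) (x : Config) :
    Dtandem x (l₁ ++ l₂) = Dtandem (Dtandem x l₁) l₂ := by
  induction l₁ generalizing x with
  | nil => rfl
  | cons s l ih => exact ih (dep x s)

/-- `p = x₁,…,x_{k-1}` (nonempty as `k ≥ 2`), `a = x_k`, `b = x_{k+1}`, `q = x_{k+2},…,xₙ`. -/
theorem stmt12 (p q : List Config) (a b : Config) (hp : p ≠ [])
    (hconf : ∀ c ∈ p ++ a :: b :: q, IsConfig c)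
    (hab : FinQ a b)
    (h1 : TandemFinQ (p ++ a :: b :: q))
    (h2 : TandemFinQ (p ++ Rmap a b :: dep a b :: q)) :
    DtandemList (p ++ a :: b :: q) = DtandemList (p ++ Rmap a b :: dep a b :: q) := by
  obtain ⟨x, p, rfl⟩ := List.exists_cons_of_ne_nil hp
  obtain ⟨h₁, h₁'⟩ := tandemFinQ_cons_cons.1 (TandemFinQ.of_append h1)
  obtain ⟨h₂, -⟩ := tandemFinQ_cons_cons.1 h₁'
  obtain ⟨h₃, h₃'⟩ := tandemFinQ_cons_cons.1 (TandemFinQ.of_append h2)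
  obtain ⟨h₄, -⟩ := tandemFinQ_cons_cons.1 h₃'
  have hy := isConfig_Dtandem (hconf x (by simp)) p
  show Dtandem x (p ++ a :: b :: q) = Dtandem x (p ++ Rmap a b :: dep a b :: q)
  rw [Dtandem_append, Dtandem_append]
  exact congrArg (Dtandem · q) <|
    dep_dep_eq_dep_dep_Rmap hy (hconf a (by simp)) (hconf b (by simp)) hab h₁ h₂ h₃ h₄
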